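/- arXiv:1407.5921 — 6 statements merged into one kernel-verified Lean document; each statement's English description precedes it below -/
import Mathlib

section
/- Let G be a group (possibly infinite) such that every class-preserving automorphism of the quotient G/Z(G) is inner. Then every class-preserving automorphism of G is a product of a central class-preserving automorphism and an inner automorphism; that is, Aut_c(G) = (Aut_c(G) ∩ Aut_z(G))·Inn(G). -/
variable {G : Type*}

/-- An automorphism is class-preserving if it sends each element to a conjugate of itself. -/
def IsClassPreserving [Group G] (α : G ≃* G) : Prop :=
  ∀ x : G, ∃ g : G, α x = g⁻¹ * x * g

/-- An automorphism is inner if it is conjugation by a fixed element. -/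
def IsInnerAut [Group G] (α : G ≃* G) : Prop :=
  ∃ g : G, ∀ x : G, α x = g⁻¹ * x * g

/-- An automorphism is central if it induces the identity on `G/Z(G)`. -/
def IsCentralAut [Group G] (α : G ≃* G) : Prop :=
  ∀ x : G, x⁻¹ * α x ∈ Subgroup.center G

lemma center_map_eq [Group G] (α : G ≃* G) :
    (Subgroup.center G).map (α : G →* G) = Subgroup.center G := by
  apply le_antisymm
  · rintro _ ⟨z, hz, rfl⟩
    simp only [SetLike.mem_coe] at hz
    rw [Subgroup.mem_center_iff]
    intro y
    have h1 : α (z * α.symm y) = α (α.symm y * z) := by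
      rw [Subgroup.mem_center_iff.mp hz]
    simpa [map_mul] using h1.symm
  · intro z hz
    refine ⟨α.symm z, ?_, by simp⟩
    simp only [SetLike.mem_coe]
    rw [Subgroup.mem_center_iff]
    intro y
    have h1 : α.symm (z * α y) = α.symm (α y * z) := by
      rw [Subgroup.mem_center_iff.mp hz]
    simpa [map_mul] using h1.symm

/-- If every class-preserving automorphism of `G/Z(G)` is inner, then every class-preserving
automorphism of `G` is the product of an inner automorphism and a central class-preserving
automorphism. -/
theorem stmt_0 (G : Type*) [Group G]
    (h : ∀ α : (G ⧸ Subgroup.center G) ≃* (G ⧸ Subgroup.center G),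
      IsClassPreserving α → IsInnerAut α) :
    ∀ α : G ≃* G, IsClassPreserving α →
      ∃ β : G ≃* G, IsClassPreserving β ∧ IsCentralAut β ∧
        ∃ a : G, ∀ x : G, α x = a⁻¹ * β x * a := by
  intro α hα
  set Z := Subgroup.center G
  let ᾱ : (G ⧸ Z) ≃* (G ⧸ Z) := QuotientGroup.congr Z Z α (center_map_eq α)
  have hᾱ : IsClassPreserving ᾱ := by
    intro xb
    refine QuotientGroup.induction_on xb fun x => ?_
    obtain ⟨g, hg⟩ := hα x
    exact ⟨QuotientGroup.mk g, by
      simp only [ᾱ, QuotientGroup.congr_mk, hg]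
      rfl⟩
  obtain ⟨b, hb⟩ := h ᾱ hᾱ
  obtain ⟨a, rfl⟩ := QuotientGroup.mk_surjective b
  refine ⟨α.trans (MulAut.conj a), ?_, ?_, a, ?_⟩
  · intro x
    obtain ⟨g, hg⟩ := hα x
    refine ⟨g * a⁻¹, ?_⟩
    simp [MulAut.conj_apply, hg, mul_assoc]
  · intro x
    have := hb (QuotientGroup.mk x)
    simp only [ᾱ, QuotientGroup.congr_mk] at this
    have h2 : QuotientGroup.mk (x⁻¹ * (a * α x * a⁻¹)) = (1 : G ⧸ Z) := by
      have : (QuotientGroup.mk (α x) : G ⧸ Z) =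
          QuotientGroup.mk (a⁻¹ * x * a) := by
        rw [this]; rfl
      simp only [QuotientGroup.mk_mul, QuotientGroup.mk_inv, this]
      group
    rw [← QuotientGroup.eq_one_iff]
    simpa using h2
  · intro x
    simp [MulAut.conj_apply, mul_assoc]
end

section
/- Let G be a finite group such that every class-preserving automorphism of G/Z(G) is inner. Then |Aut_c(G)| = |Aut_c(G) ∩ Aut_z(G)| · |Inn(G)| / |Z(Inn(G))|. -/
/-!
Sending `α` to the automorphism it induces on `G ⧸ Z(G)` is a homomorphism on `Aut_c(G)` with
kernel `Aut_c(G) ∩ Aut_z(G)`. Its image consists of class-preserving automorphisms of `G ⧸ Z(G)`,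
hence lies in `Inn(G ⧸ Z(G))` by hypothesis, and contains it because inner automorphisms
lift. So `|Aut_c(G)| = |Aut_c(G) ∩ Aut_z(G)| ⬝ |Inn(G ⧸ Z(G))|`. Finally `Inn(G) ≅ G ⧸ Z(G)`, so
`Z(Inn(G)) ≅ Z(G ⧸ Z(G))` and `|Inn(G ⧸ Z(G))| ⬝ |Z(G ⧸ Z(G))| = |G ⧸ Z(G)| = |Inn(G)|`.
-/

variable {G : Type*}

open Subgroup QuotientGroup

theorem MonoidHom.card_ker_inf_mul_card_map {H : Type*} [Group G] [Group H] (f : G →* H)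
    (K : Subgroup G) : Nat.card ↥(f.ker ⊓ K) * Nat.card ↥(K.map f) = Nat.card K := by
  rw [← relIndex_bot_left, ← relIndex_ker, relIndex_inf_mul_relIndex, bot_inf_eq,
    relIndex_bot_left]

namespace MulAut

variable [Group G]

theorem ker_conj : (conj : G →* MulAut G).ker = center G := by
  ext g
  simp only [MonoidHom.mem_ker, MulEquiv.ext_iff, conj_apply, one_apply, mem_center_iff]
  exact forall_congr' fun x => mul_inv_eq_iff_eq_mul.trans eq_comm

theorem card_range_conj_mul_card_center :
    Nat.card (conj : G →* MulAut G).range * Nat.card (center G) = Nat.card G := by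
  rw [← index_ker, ker_conj, index_mul_card]

variable (G) in
noncomputable def quotientCenterMulEquivRangeConj :
    G ⧸ center G ≃* (conj : G →* MulAut G).range :=
  (quotientMulEquivOfEq ker_conj.symm).trans (quotientKerEquivRange conj)

end MulAut

section

variable [Group G]

theorem isInnerAut_iff_mem_range_conj {α : MulAut G} :
    IsInnerAut α ↔ α ∈ (MulAut.conj : G →* MulAut G).range := by
  constructor
  · rintro ⟨g, hg⟩
    exact ⟨g⁻¹, MulEquiv.ext fun x => by simp [hg x]⟩
  · rintro ⟨g, rfl⟩
    exact ⟨g⁻¹, fun x => by simp⟩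

variable (G) in
def classPreservingAut : Subgroup (MulAut G) where
  carrier := {α | IsClassPreserving α}
  one_mem' x := ⟨1, by simp⟩
  mul_mem' {a b} ha hb x := by
    obtain ⟨g, hg⟩ := hb x
    obtain ⟨k, hk⟩ := ha (b x)
    exact ⟨g * k, by rw [MulAut.mul_apply, hk, hg]; group⟩
  inv_mem' {a} ha x := by
    obtain ⟨g, hg⟩ := ha (a⁻¹ x)
    rw [MulAut.apply_inv_self] at hg
    exact ⟨g⁻¹, by nth_rw 2 [hg]; group⟩

variable (G) in
def autQuotientCenter : MulAut G →* MulAut (G ⧸ center G) where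
  toFun α := congr (center G) (center G) α (characteristic_iff_map_eq.mp inferInstance α)
  map_one' := by ext x; induction x using QuotientGroup.induction_on; rfl
  map_mul' a b := by ext x; induction x using QuotientGroup.induction_on; rfl

@[simp]
theorem autQuotientCenter_mk (α : MulAut G) (x : G) :
    autQuotientCenter G α (x : G ⧸ center G) = α x := rfl

theorem autQuotientCenter_eq_one_iff {α : MulAut G} :
    autQuotientCenter G α = 1 ↔ IsCentralAut α := by
  simp only [MulEquiv.ext_iff, MulAut.one_apply, QuotientGroup.forall_mk, autQuotientCenter_mk,
    QuotientGroup.eq, IsCentralAut]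
  exact forall_congr' fun x => by rw [← inv_mem_iff, mul_inv_rev, inv_inv]

theorem IsClassPreserving.autQuotientCenter {α : MulAut G} (hα : IsClassPreserving α) :
    IsClassPreserving (autQuotientCenter G α) := by
  intro x
  induction x using QuotientGroup.induction_on with | H x => ?_
  obtain ⟨g, hg⟩ := hα x
  exact ⟨g, by simp [hg]⟩

theorem range_conj_le_map_classPreservingAut :
    (MulAut.conj : G ⧸ center G →* _).range ≤
      (classPreservingAut G).map (autQuotientCenter G) := by
  rintro _ ⟨a, rfl⟩
  induction a using QuotientGroup.induction_on with | H a => ?_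
  refine ⟨MulAut.conj a, fun x => ⟨a⁻¹, by simp⟩, ?_⟩
  ext x
  induction x using QuotientGroup.induction_on
  simp

theorem map_classPreservingAut_eq_range_conj
    (h : ∀ β : MulAut (G ⧸ center G), IsClassPreserving β → IsInnerAut β) :
    (classPreservingAut G).map (autQuotientCenter G) =
      (MulAut.conj : G ⧸ center G →* _).range :=
  le_antisymm
    (map_le_iff_le_comap.mpr fun _ hα =>
      isInnerAut_iff_mem_range_conj.mp (h _ hα.autQuotientCenter))
    range_conj_le_map_classPreservingAut

theorem card_classPreserving_central_mul_card_range_conj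
    (h : ∀ β : MulAut (G ⧸ center G), IsClassPreserving β → IsInnerAut β) :
    Nat.card {α : MulAut G // IsClassPreserving α ∧ IsCentralAut α} *
      Nat.card (MulAut.conj : G ⧸ center G →* _).range =
    Nat.card {α : MulAut G // IsClassPreserving α} := by
  change _ = Nat.card (classPreservingAut G)
  rw [← map_classPreservingAut_eq_range_conj h,
    ← (autQuotientCenter G).card_ker_inf_mul_card_map]
  congr 1
  exact Nat.card_congr <| Equiv.subtypeEquivRight fun α => by
    rw [mem_inf, MonoidHom.mem_ker, autQuotientCenter_eq_one_iff, and_comm]; rfl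

end

theorem stmt_1_general (G : Type*) [Group G]
    (h : ∀ α : (G ⧸ Subgroup.center G) ≃* (G ⧸ Subgroup.center G),
      IsClassPreserving α → IsInnerAut α) :
    Nat.card {α : G ≃* G // IsClassPreserving α} *
      Nat.card (Subgroup.center ↥(MulAut.conj (G := G)).range) =
    Nat.card {α : G ≃* G // IsClassPreserving α ∧ IsCentralAut α} *
      Nat.card {α : G ≃* G // IsInnerAut α} := by
  have e := MulAut.quotientCenterMulEquivRangeConj G
  have hinner : Nat.card {α : G ≃* G // IsInnerAut α} = Nat.card (G ⧸ center G) :=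
    (Nat.card_congr (Equiv.subtypeEquivRight fun _ => isInnerAut_iff_mem_range_conj)).trans
      (Nat.card_congr e.toEquiv).symm
  have hcenter :
      Nat.card (center (MulAut.conj (G := G)).range) = Nat.card (center (G ⧸ center G)) :=
    Nat.card_congr (centerCongr e).symm.toEquiv
  rw [← card_classPreserving_central_mul_card_range_conj h, hcenter, hinner, mul_assoc,
    MulAut.card_range_conj_mul_card_center]

/-- If `G` is finite and every class-preserving automorphism of `G/Z(G)` is inner, then
`|Aut_c(G)| ⬝ |Z(Inn(G))| = |Aut_c(G) ∩ Aut_z(G)| ⬝ |Inn(G)|`. -/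
theorem stmt_1 (G : Type*) [Group G] [Finite G]
    (h : ∀ α : (G ⧸ Subgroup.center G) ≃* (G ⧸ Subgroup.center G),
      IsClassPreserving α → IsInnerAut α) :
    Nat.card {α : G ≃* G // IsClassPreserving α} *
      Nat.card (Subgroup.center ↥(MulAut.conj (G := G)).range) =
    Nat.card {α : G ≃* G // IsClassPreserving α ∧ IsCentralAut α} *
      Nat.card {α : G ≃* G // IsInnerAut α} :=
  stmt_1_general G h
end

section
/- Let G be a finite p-group possessing an abelian subgroup of index p (a maximal abelian subgroup). Then every class-preserving automorphism of G is inner. -/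
variable {G : Type*}

/-- A finite group cannot be covered by `p` proper subgroups if it is a `p`-group. -/
lemma exists_le_of_cover {G : Type*} [Group G] [Finite G] (p : ℕ) [Fact p.Prime]
    (hG : IsPGroup p G) (A : Subgroup G) (B : ℕ → Subgroup G)
    (hle : ∀ i, B i ≤ A) (hcover : ∀ a ∈ A, ∃ i, i < p ∧ a ∈ B i) :
    ∃ k, k < p ∧ A ≤ B k := by
  classical
  have hp := Fact.out (p := p.Prime)
  by_contra hcon
  push_neg at hcon
  obtain ⟨b, hb⟩ := (IsPGroup.iff_card).mp (hG.to_subgroup A)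
  rcases Nat.eq_zero_or_pos b with hb0 | hbpos
  · have : A = ⊥ := Subgroup.card_eq_one.mp (by rw [hb, hb0, pow_zero])
    exact hcon 0 hp.pos (this ▸ bot_le)
  -- every B i is a proper subgroup, hence has card ≤ p ^ (b - 1)
  have hBcard : ∀ i, i < p → Nat.card (B i) ≤ p ^ (b - 1) := by
    intro i hi
    obtain ⟨c, hc⟩ := (IsPGroup.iff_card).mp (hG.to_subgroup (B i))
    have hdvd : Nat.card (B i) ∣ Nat.card A := Subgroup.card_dvd_of_le (hle i)
    rw [hb, hc] at hdvd
    have hcb : c ≤ b := (Nat.pow_dvd_pow_iff_le_right hp.one_lt).mp hdvd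
    have hne : c ≠ b := by
      intro h
      subst h
      have : B i = A := Subgroup.eq_of_le_of_card_ge (hle i) (by rw [hb, hc])
      exact hcon i hi (this ▸ le_rfl)
    rw [hc]
    exact Nat.pow_le_pow_right hp.pos (by omega)
  -- counting
  haveI := Fintype.ofFinite G
  let FB : ℕ → Finset G := fun i => Set.toFinset (B i : Set G)
  let FA : Finset G := Set.toFinset (A : Set G)
  have hsub : FA \ {1} ⊆ (Finset.range p).biUnion (fun i => FB i \ {1}) := by
    intro a ha
    simp only [Finset.mem_sdiff, Finset.mem_singleton, Set.mem_toFinset, SetLike.mem_coe,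
      FA] at ha
    obtain ⟨i, hi, hmem⟩ := hcover a ha.1
    simp only [Finset.mem_biUnion, Finset.mem_range]
    exact ⟨i, hi, by simp [FB, Finset.mem_sdiff, hmem, ha.2]⟩
  have hFA : FA.card = Nat.card A := by
    rw [Set.toFinset_card, Nat.card_eq_fintype_card]
    exact (Fintype.card_congr (Equiv.refl _)).symm
  have hFB : ∀ i, (FB i).card = Nat.card (B i) := by
    intro i
    rw [Set.toFinset_card, Nat.card_eq_fintype_card]
    exact (Fintype.card_congr (Equiv.refl _)).symm
  have h1A : (1 : G) ∈ FA := Set.mem_toFinset.mpr A.one_mem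
  have h1B : ∀ i, (1 : G) ∈ FB i := fun i => Set.mem_toFinset.mpr (B i).one_mem
  have hcard1 : (FA \ {1}).card = Nat.card A - 1 := by
    rw [Finset.card_sdiff_of_subset (by simpa using h1A), Finset.card_singleton, hFA]
  have hcard2 : ((Finset.range p).biUnion (fun i => FB i \ {1})).card
      ≤ p * (p ^ (b - 1) - 1) := by
    refine le_trans (Finset.card_biUnion_le) ?_
    have hterm : ∀ i ∈ Finset.range p, (FB i \ {1}).card ≤ p ^ (b - 1) - 1 := by
      intro i hi
      rw [Finset.card_sdiff_of_subset (by simpa using h1B i), Finset.card_singleton, hFB]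
      have := hBcard i (Finset.mem_range.mp hi)
      omega
    calc ∑ i ∈ Finset.range p, (FB i \ {1}).card
        ≤ ∑ _i ∈ Finset.range p, (p ^ (b - 1) - 1) := Finset.sum_le_sum hterm
      _ = p * (p ^ (b - 1) - 1) := by rw [Finset.sum_const, Finset.card_range, smul_eq_mul]
  have hineq : Nat.card A - 1 ≤ p * (p ^ (b - 1) - 1) := by
    rw [← hcard1]
    exact le_trans (Finset.card_le_card hsub) hcard2
  rw [hb] at hineq
  have hq : 1 ≤ p ^ (b - 1) := Nat.one_le_pow _ _ hp.pos
  have hsplit : p ^ b = p * p ^ (b - 1) := by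
    conv_lhs => rw [show b = (b - 1) + 1 by omega]
    rw [pow_succ, mul_comm]
  obtain ⟨q, hqq⟩ : ∃ q, p ^ (b - 1) = q + 1 := ⟨p ^ (b - 1) - 1, by omega⟩
  rw [hsplit, hqq] at hineq
  simp only [Nat.add_sub_cancel] at hineq
  have h2 : p * (q + 1) = p * q + p := by ring
  rw [h2] at hineq
  have hp2 := hp.two_le
  set X := p * q with hX
  omega

/-- A finite p-group with an abelian subgroup of index p has all class-preserving
automorphisms inner. -/
theorem stmt_2 (G : Type*) [Group G] [Finite G] (p : ℕ) [Fact p.Prime]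
    (hG : IsPGroup p G) (A : Subgroup G) (hA : A.index = p)
    (hab : ∀ x ∈ A, ∀ y ∈ A, x * y = y * x) :
    ∀ α : G ≃* G, IsClassPreserving α → IsInnerAut α := by
  have hp := Fact.out (p := p.Prime)
  -- `A` is normal, being of index `p` in a `p`-group (hence a coatom in a nilpotent group)
  have hAne : A ≠ ⊤ := by
    intro h
    rw [h, Subgroup.index_top] at hA
    exact hp.one_lt.ne' hA.symm
  haveI hAnorm : A.Normal := by
    have hcoatom : IsCoatom A := by
      refine ⟨hAne, fun K hK => ?_⟩
      have h1 : A.relIndex K * K.index = A.index := Subgroup.relIndex_mul_index hK.le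
      rw [hA] at h1
      have h2 : A.relIndex K ∣ p := ⟨K.index, h1.symm⟩
      rcases (Nat.Prime.eq_one_or_self_of_dvd hp _ h2) with h | h
      · exact absurd (Subgroup.relIndex_eq_one.mp h) (fun hle => hK.ne (le_antisymm hK.le hle))
      · rw [h] at h1
        have : K.index = 1 := Nat.eq_of_mul_eq_mul_left hp.pos (by rw [h1, mul_one])
        exact Subgroup.index_eq_one.mp this
    haveI : _root_.Group.IsNilpotent G := hG.isNilpotent
    have h3 := (isNilpotent_of_finite_tfae (G := G)).out 0 2
    exact h3.mp ‹_› A hcoatom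
  -- choose `t ∉ A`; then `G = ⟨A, t⟩` and `t ^ p ∈ A`
  obtain ⟨t, ht⟩ : ∃ t : G, t ∉ A := by
    by_contra h
    push_neg at h
    exact hAne ((Subgroup.eq_top_iff' A).mpr h)
  have hcard : Nat.card (G ⧸ A) = p := hA
  have hτ : (t : G ⧸ A) ≠ 1 := by simpa [QuotientGroup.eq_one_iff] using ht
  have horder : orderOf (t : G ⧸ A) = p := by
    have h1 : orderOf (t : G ⧸ A) ∣ p := hcard ▸ orderOf_dvd_natCard _
    rcases hp.eq_one_or_self_of_dvd _ h1 with h | h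
    · exact absurd (orderOf_eq_one_iff.mp h) hτ
    · exact h
  have htop : Subgroup.zpowers (t : G ⧸ A) = ⊤ := by
    apply Subgroup.eq_top_of_card_eq
    rw [Nat.card_zpowers, horder, hcard]
  have hdec : ∀ x : G, ∃ n : ℕ, (t ^ n)⁻¹ * x ∈ A := by
    intro x
    have hx : (x : G ⧸ A) ∈ Subgroup.zpowers (t : G ⧸ A) := htop ▸ Subgroup.mem_top _
    rw [← mem_powers_iff_mem_zpowers] at hx
    obtain ⟨n, hn⟩ := hx
    refine ⟨n, ?_⟩
    have hn' : ((t ^ n : G) : G ⧸ A) = (x : G ⧸ A) := by simpa using hn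
    exact QuotientGroup.eq.mp hn'
  have htp : t ^ p ∈ A := by
    have h1 : ((t : G ⧸ A)) ^ p = 1 := by rw [← horder]; exact pow_orderOf_eq_one _
    rwa [← QuotientGroup.mk_pow, QuotientGroup.eq_one_iff] at h1
  have hconjA : ∀ (i : ℕ), ∀ a ∈ A, (t ^ i)⁻¹ * a * t ^ i ∈ A := by
    intro i a ha
    simpa [mul_assoc] using hAnorm.conj_mem a ha (t ^ i)⁻¹
  -- it suffices to treat class-preserving automorphisms fixing `t`
  suffices H : ∀ β : G ≃* G, IsClassPreserving β → β t = t → IsInnerAut β by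
    intro α hα
    obtain ⟨g, hg⟩ := hα t
    have hβcp : IsClassPreserving (α.trans (MulAut.conj g)) := by
      intro x
      obtain ⟨h, hh⟩ := hα x
      refine ⟨h * g⁻¹, ?_⟩
      simp only [MulEquiv.trans_apply, MulAut.conj_apply, hh]
      group
    have hβt : (α.trans (MulAut.conj g)) t = t := by
      simp only [MulEquiv.trans_apply, MulAut.conj_apply, hg]
      group
    obtain ⟨k, hk⟩ := H _ hβcp hβt
    refine ⟨k * g, fun x => ?_⟩
    have h1 := hk x
    simp only [MulEquiv.trans_apply, MulAut.conj_apply] at h1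
    have h2 : α x = g⁻¹ * (k⁻¹ * x * k) * g := by rw [← h1]; group
    rw [h2]
    group
  intro β hβ hβt
  -- the subgroups `B i` where `β` agrees with conjugation by `t ^ i`
  let B : ℕ → Subgroup G := fun i =>
    { carrier := {a | a ∈ A ∧ β a = (t ^ i)⁻¹ * a * t ^ i}
      one_mem' := ⟨A.one_mem, by simp⟩
      mul_mem' := by
        rintro a b ⟨ha, ha'⟩ ⟨hb, hb'⟩
        refine ⟨A.mul_mem ha hb, ?_⟩
        rw [map_mul, ha', hb']
        group
      inv_mem' := by
        rintro a ⟨ha, ha'⟩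
        refine ⟨A.inv_mem ha, ?_⟩
        rw [map_inv, ha']
        group }
  have hle : ∀ i, B i ≤ A := fun i a ha => ha.1
  have hcover : ∀ a ∈ A, ∃ i, i < p ∧ a ∈ B i := by
    intro a ha
    obtain ⟨h, hh⟩ := hβ a
    obtain ⟨n, hn⟩ := hdec h
    set c : G := (t ^ n)⁻¹ * h with hc
    have hhc : h = t ^ n * c := by rw [hc]; group
    have hconj : (t ^ n)⁻¹ * a * t ^ n ∈ A := hconjA n a ha
    have h1 : β a = (t ^ n)⁻¹ * a * t ^ n := by
      rw [hh, hhc]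
      have hcomm := hab ((t ^ n)⁻¹ * a * t ^ n) hconj c hn
      calc (t ^ n * c)⁻¹ * a * (t ^ n * c)
          = c⁻¹ * (((t ^ n)⁻¹ * a * t ^ n) * c) := by group
        _ = c⁻¹ * (c * ((t ^ n)⁻¹ * a * t ^ n)) := by rw [hcomm]
        _ = (t ^ n)⁻¹ * a * t ^ n := by group
    have htpq : (t ^ p) ^ (n / p) ∈ A := A.pow_mem htp _
    have e3 : t ^ n = (t ^ p) ^ (n / p) * t ^ (n % p) := by
      rw [← pow_mul, ← pow_add]
      exact congrArg (t ^ ·) (Nat.div_add_mod n p).symm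
    have e4 : ((t ^ p) ^ (n / p))⁻¹ * a * (t ^ p) ^ (n / p) = a := by
      have hcomm := hab a ha ((t ^ p) ^ (n / p)) htpq
      calc ((t ^ p) ^ (n / p))⁻¹ * a * (t ^ p) ^ (n / p)
          = ((t ^ p) ^ (n / p))⁻¹ * (a * (t ^ p) ^ (n / p)) := by group
        _ = ((t ^ p) ^ (n / p))⁻¹ * ((t ^ p) ^ (n / p) * a) := by rw [hcomm]
        _ = a := by group
    refine ⟨n % p, Nat.mod_lt _ hp.pos, ha, ?_⟩
    rw [h1, e3]
    calc ((t ^ p) ^ (n / p) * t ^ (n % p))⁻¹ * a * ((t ^ p) ^ (n / p) * t ^ (n % p))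
        = (t ^ (n % p))⁻¹ * (((t ^ p) ^ (n / p))⁻¹ * a * (t ^ p) ^ (n / p)) * t ^ (n % p) := by
          group
      _ = (t ^ (n % p))⁻¹ * a * t ^ (n % p) := by rw [e4]
  -- one of the `B i` is all of `A`, so `β` is conjugation by `t ^ k`
  obtain ⟨k, _hk, hAk⟩ := exists_le_of_cover p hG A B hle hcover
  refine ⟨t ^ k, fun x => ?_⟩
  obtain ⟨n, hn⟩ := hdec x
  set a : G := (t ^ n)⁻¹ * x with hadef
  have hx : x = t ^ n * a := by rw [hadef]; group
  have hβa : β a = (t ^ k)⁻¹ * a * t ^ k := (hAk hn).2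
  have comm : t ^ n * (t ^ k)⁻¹ = (t ^ k)⁻¹ * t ^ n :=
    (((Commute.refl t).pow_pow n k).inv_right).eq
  rw [hx, map_mul, map_pow, hβt, hβa]
  calc t ^ n * ((t ^ k)⁻¹ * a * t ^ k)
      = (t ^ n * (t ^ k)⁻¹) * a * t ^ k := by group
    _ = ((t ^ k)⁻¹ * t ^ n) * a * t ^ k := by rw [comm]
    _ = (t ^ k)⁻¹ * (t ^ n * a) * t ^ k := by group
end

section
/- Let G be a finite p-group of nilpotency class 2 such that the commutator subgroup G' is cyclic. Then every class-preserving automorphism of G is inner. -/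
/-!
In a group of class 2 the commutator ⁅x, y⁆ is bilinear and only depends on the classes of `x`
and `y` modulo the centre `Z`, so `x ↦ ⁅x, -⁆` is a homomorphism `G → Hom(G/Z, G')` with kernel
`Z`. A class-preserving `α` moves every `y` by `α y * y⁻¹ ∈ G'`, which is again an element of
`Hom(G/Z, G')`. When `G'` is cyclic, the exponent of `G/Z` divides `|G'|`, so duality for finite
abelian groups gives `|Hom(G/Z, G')| = |G/Z|` and the pairing is onto: `α y * y⁻¹ = ⁅x, y⁆` for
some `x` and all `y`, i.e. `α` is conjugation by `x`.
-/

variable {G : Type*}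

-- `IsMulCommutative` supplies the `CommGroup` structures on `commutator G` and on hom groups.
open scoped IsMulCommutative commutatorElement
open Subgroup (center mem_center_iff mem_top commutator_mem_commutator)

lemma IsCyclic.hasEnoughRootsOfUnity_of_dvd {C : Type*} [Group C] [IsCyclic C] [Finite C]
    {n : ℕ} (hn : n ∣ Nat.card C) : HasEnoughRootsOfUnity C n where
  prim := by
    obtain ⟨g, hg⟩ := IsCyclic.exists_ofOrder_eq_natCard (α := C)
    obtain ⟨k, hk⟩ := hn
    exact ⟨g ^ k, (hg ▸ IsPrimitiveRoot.orderOf g).pow Nat.card_pos (by rw [hk, mul_comm])⟩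
  cyc :=
    have : IsCyclic Cˣ := isCyclic_of_surjective _ (toUnits (G := C)).surjective
    inferInstance

lemma IsCyclic.card_monoidHom_eq_card {A C : Type*} [Group A] [IsMulCommutative A] [Finite A]
    [Group C] [IsCyclic C] [Finite C] (h : Monoid.exponent A ∣ Monoid.exponent C) :
    Nat.card (A →* C) = Nat.card A := by
  rw [IsCyclic.exponent_eq_card (α := C)] at h
  have := IsCyclic.hasEnoughRootsOfUnity_of_dvd h
  obtain ⟨e⟩ := CommGroup.monoidHom_mulEquiv_of_hasEnoughRootsOfUnity A C
  exact Nat.card_congr ((MulEquiv.monoidHomCongrRight toUnits).toEquiv.trans e.toEquiv)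

section ClassTwo

variable [Group G]

lemma commutatorElement_mem_commutator (x y : G) : ⁅x, y⁆ ∈ commutator G :=
  commutator_mem_commutator (mem_top x) (mem_top y)

lemma commute_commutatorElement (hc : commutator G ≤ center G) (x y z : G) :
    Commute ⁅x, y⁆ z :=
  (mem_center_iff.mp (hc (commutatorElement_mem_commutator x y)) z).symm

lemma commutatorElement_mul_left (hc : commutator G ≤ center G) (x y z : G) :
    ⁅x * y, z⁆ = ⁅x, z⁆ * ⁅y, z⁆ := by
  rw [commutatorElement_mul_left_eq_conj_mul, ← (commute_commutatorElement hc y z x).eq,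
    mul_inv_cancel_right, (commute_commutatorElement hc y z _).eq]

lemma commutatorElement_mul_right (hc : commutator G ≤ center G) (x y z : G) :
    ⁅x, y * z⁆ = ⁅x, y⁆ * ⁅x, z⁆ := by
  rw [commutatorElement_mul_right_eq_mul_conj, mul_assoc _ y,
    ← (commute_commutatorElement hc x z y).eq, ← mul_assoc, mul_inv_cancel_right]

lemma commutatorElement_pow_left (hc : commutator G ≤ center G) (x y : G) (n : ℕ) :
    ⁅x ^ n, y⁆ = ⁅x, y⁆ ^ n := by
  induction n with
  | zero => simp
  | succ n ih => rw [pow_succ, commutatorElement_mul_left hc, ih, pow_succ]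

lemma exponent_quotient_center_dvd_exponent_commutator (hc : commutator G ≤ center G) :
    Monoid.exponent (G ⧸ center G) ∣ Monoid.exponent (commutator G) := by
  refine Monoid.exponent_dvd_of_forall_pow_eq_one fun q => ?_
  induction q using QuotientGroup.induction_on with | H x => ?_
  rw [← QuotientGroup.mk_pow, QuotientGroup.eq_one_iff, mem_center_iff]
  intro y
  rw [eq_comm, ← commutatorElement_eq_one_iff_mul_comm, commutatorElement_pow_left hc]
  exact congr_arg Subtype.val
    (Monoid.pow_exponent_eq_one (⟨_, commutatorElement_mem_commutator x y⟩ : commutator G))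

section Pairing

variable [IsMulCommutative (commutator G)]

def commutatorPairing (hc : commutator G ≤ center G) :
    G →* (G ⧸ center G →* commutator G) where
  toFun x := QuotientGroup.lift (center G)
    { toFun y := ⟨⁅x, y⁆, commutatorElement_mem_commutator x y⟩
      map_one' := Subtype.ext (commutatorElement_one_right x)
      map_mul' y z := Subtype.ext (commutatorElement_mul_right hc x y z) }
    fun z hz => Subtype.ext <| commutatorElement_eq_one_iff_mul_comm.mpr (mem_center_iff.mp hz x)
  map_one' := by
    ext y
    exact commutatorElement_one_left y
  map_mul' x x' := by
    ext y
    exact commutatorElement_mul_left hc x x' y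

@[simp]
lemma commutatorPairing_apply_mk (hc : commutator G ≤ center G) (x y : G) :
    (commutatorPairing hc x y : G) = ⁅x, y⁆ := rfl

lemma ker_commutatorPairing (hc : commutator G ≤ center G) :
    (commutatorPairing hc).ker = center G := by
  ext x
  rw [MonoidHom.mem_ker, mem_center_iff]
  refine ⟨fun h y => ?_, fun h => ?_⟩
  · have := congr_arg Subtype.val (DFunLike.congr_fun h (y : G ⧸ center G))
    exact (commutatorElement_eq_one_iff_mul_comm.mp this).symm
  · ext y
    exact commutatorElement_eq_one_iff_mul_comm.mpr (h y).symm

end Pairing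

lemma commutatorPairing_surjective [Finite G] [IsCyclic (commutator G)]
    (hc : commutator G ≤ center G) : Function.Surjective (commutatorPairing hc) := by
  have : Finite (G ⧸ center G →* commutator G) := .of_injective _ DFunLike.coe_injective
  rw [← MonoidHom.range_eq_top]
  apply Subgroup.eq_top_of_card_eq
  have : IsMulCommutative (G ⧸ center G) :=
    Subgroup.Normal.quotient_commutative_iff_commutator_le.mpr hc
  rw [← Nat.card_congr (QuotientGroup.quotientKerEquivRange _).toEquiv, ker_commutatorPairing hc]
  exact (IsCyclic.card_monoidHom_eq_card (exponent_quotient_center_dvd_exponent_commutator hc)).symm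

end ClassTwo

namespace IsClassPreserving

variable [Group G] {α : G ≃* G}

lemma apply_mul_inv_mem_commutator (hα : IsClassPreserving α) (x : G) :
    α x * x⁻¹ ∈ commutator G := by
  obtain ⟨g, hg⟩ := hα x
  simpa [hg, commutatorElement_def] using commutatorElement_mem_commutator g⁻¹ x

lemma apply_eq_self_of_mem_center (hα : IsClassPreserving α) {z : G} (hz : z ∈ center G) :
    α z = z := by
  obtain ⟨g, hg⟩ := hα z
  rw [hg, mul_assoc, ← mem_center_iff.mp hz g, inv_mul_cancel_left]

def displacement (hα : IsClassPreserving α) (hc : commutator G ≤ center G) :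
    G ⧸ center G →* commutator G :=
  QuotientGroup.lift (center G)
    { toFun x := ⟨α x * x⁻¹, hα.apply_mul_inv_mem_commutator x⟩
      map_one' := by ext; simp
      map_mul' x y := by
        ext
        have hcomm := mem_center_iff.mp (hc (hα.apply_mul_inv_mem_commutator y)) x⁻¹
        calc α (x * y) * (x * y)⁻¹ = α x * ((α y * y⁻¹) * x⁻¹) := by simp [mul_assoc]
          _ = α x * x⁻¹ * (α y * y⁻¹) := by rw [← hcomm, mul_assoc] }
    fun z hz => Subtype.ext <| by simp [hα.apply_eq_self_of_mem_center hz]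

lemma displacement_mk (hα : IsClassPreserving α) (hc : commutator G ≤ center G) (x : G) :
    (hα.displacement hc x : G) = α x * x⁻¹ := rfl

end IsClassPreserving

theorem stmt_4_general (G : Type*) [Group G] [Finite G]
    (hclass2 : commutator G ≤ Subgroup.center G)
    (hcyc : IsCyclic ↥(commutator G)) :
    ∀ α : G ≃* G, IsClassPreserving α → IsInnerAut α := by
  intro α hα
  obtain ⟨x, hx⟩ := commutatorPairing_surjective hclass2 (hα.displacement hclass2)
  refine ⟨x⁻¹, fun y => ?_⟩
  have hy : α y * y⁻¹ = ⁅x, y⁆ := by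
    rw [← hα.displacement_mk hclass2, ← hx, commutatorPairing_apply_mk]
  rw [mul_inv_eq_iff_eq_mul] at hy
  rw [hy, commutatorElement_def, inv_inv, inv_mul_cancel_right]

/-- A finite p-group of class 2 with cyclic commutator subgroup has all class-preserving
automorphisms inner. -/
theorem stmt_4 (G : Type*) [Group G] [Finite G] (p : ℕ) [Fact p.Prime]
    (hG : IsPGroup p G) (hclass2 : commutator G ≤ Subgroup.center G)
    (hcyc : IsCyclic ↥(commutator G)) :
    ∀ α : G ≃* G, IsClassPreserving α → IsInnerAut α :=
  stmt_4_general G hclass2 hcyc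
end

section
/- Let G be a finite p-group of order p^5 of nilpotency class 2 with Z(G) = G' elementary abelian of order p². Then G has an abelian subgroup of index p. -/
/-!
Let `Z = Z(G)`. The quotient `G/Z` has order `p³` and exponent `p`, so it suffices to find
commuting `u, v` whose images in `G/Z` are independent: then `⟨u, v, Z⟩` is abelian of order `p⁴`.
Fix a noncentral `x`. In class 2 the map `⁅x, ·⁆` is a homomorphism `G → Z` whose kernel is the
centralizer of `x`. If it is not onto, the centralizer has index `p`, so it contains some `v`
independent of `u = x` modulo `Z`. If it is onto, choose `a, b` such that `⁅x, a⁆, ⁅x, b⁆`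
generate `Z` and write `⁅a, b⁆ = ⁅x, a⁆ ^ m * ⁅x, b⁆ ^ n`; then `u = a * x ^ (-n)` and
`v = b * x ^ m` commute, and `⁅x, u⁆ = ⁅x, a⁆`, `⁅x, v⁆ = ⁅x, b⁆` show that they are independent
modulo `Z`.
-/

variable {G : Type*}

open Subgroup
open scoped commutatorElement IsMulCommutative

section PrimePowerCard

variable [Group G] [Finite G] {p : ℕ}

theorem Subgroup.prime_mul_card_dvd_card_of_lt (hp : p.Prime) {n : ℕ} {H K : Subgroup G}
    (hHK : H < K) (hK : Nat.card K ∣ p ^ n) : p * Nat.card H ∣ Nat.card K := by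
  obtain ⟨j, -, hj⟩ := (Nat.dvd_prime_pow hp).mp hK
  obtain ⟨i, -, hi⟩ := (Nat.dvd_prime_pow hp).mp ((card_dvd_of_le hHK.le).trans hK)
  have hlt : Nat.card H < Nat.card K := (card_le_of_le hHK.le).lt_of_ne fun h =>
    hHK.ne (eq_of_le_of_card_ge hHK.le h.ge)
  rw [hi, hj] at hlt ⊢
  rw [← pow_succ']
  exact pow_dvd_pow p ((Nat.pow_lt_pow_iff_right hp.one_lt).mp hlt)

theorem Subgroup.closure_pair_eq_top_of_card_eq_sq (hp : p.Prime) (hG : Nat.card G = p ^ 2)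
    {z₁ z₂ : G} (h₁ : orderOf z₁ = p) (h₂ : z₂ ∉ zpowers z₁) : closure {z₁, z₂} = ⊤ := by
  have hlt : zpowers z₁ < closure {z₁, z₂} := SetLike.lt_iff_le_and_exists.mpr
    ⟨zpowers_le.mpr (subset_closure (by simp)), z₂, subset_closure (by simp), h₂⟩
  have hdvd := prime_mul_card_dvd_card_of_lt hp hlt (hG ▸ card_subgroup_dvd_card _)
  rw [Nat.card_zpowers, h₁, ← sq, ← hG] at hdvd
  exact eq_top_of_le_card _ (Nat.le_of_dvd Nat.card_pos hdvd)

end PrimePowerCard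

namespace QuotientGroup

variable {H : Type*} [Group G] [Group H] {N : Subgroup G} [N.Normal]

theorem orderOf_mk_eq_prime {p : ℕ} [Fact p.Prime] (hexp : ∀ g : G, g ^ p ∈ N) {u : G}
    (hu : u ∉ N) : orderOf (u : G ⧸ N) = p :=
  orderOf_eq_prime (by rw [← mk_pow, eq_one_iff]; exact hexp u) (by rwa [Ne, eq_one_iff])

theorem apply_mem_zpowers_of_mk_mem_zpowers (f : G →* H) (hN : N ≤ f.ker) {u v : G}
    (h : (v : G ⧸ N) ∈ zpowers (u : G ⧸ N)) : f v ∈ zpowers (f u) := by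
  obtain ⟨k, hk⟩ := h
  exact ⟨k, by simpa using congrArg (lift N f hN) hk⟩

end QuotientGroup

section CentralCommutators

variable [Group G]

theorem commutatorElement_mul_right_of_mem_center (hc : ∀ g h : G, ⁅g, h⁆ ∈ center G)
    (x y z : G) : ⁅x, y * z⁆ = ⁅x, y⁆ * ⁅x, z⁆ := by
  rw [commutatorElement_mul_right_eq_mul_conj, mul_assoc _ y, mem_center_iff.mp (hc x z) y]
  group

def commutatorHom (hc : ∀ g h : G, ⁅g, h⁆ ∈ center G) (x : G) : G →* center G where
  toFun y := ⟨⁅x, y⁆, hc x y⟩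
  map_one' := Subtype.ext (commutatorElement_one_right x)
  map_mul' y z := Subtype.ext (commutatorElement_mul_right_of_mem_center hc x y z)

variable {hc : ∀ g h : G, ⁅g, h⁆ ∈ center G}

@[simp]
theorem coe_commutatorHom_apply (x y : G) : (commutatorHom hc x y : G) = ⁅x, y⁆ := rfl

theorem commutatorHom_apply_eq_one_iff {x y : G} : commutatorHom hc x y = 1 ↔ Commute x y := by
  rw [← Subtype.coe_inj, coe_commutatorHom_apply, OneMemClass.coe_one,
    commutatorElement_eq_one_iff_commute]

@[simp]
theorem commutatorHom_apply_self (x : G) : commutatorHom hc x x = 1 :=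
  commutatorHom_apply_eq_one_iff.mpr (Commute.refl x)

theorem commutatorHom_apply_comm (x y : G) :
    commutatorHom hc y x = (commutatorHom hc x y)⁻¹ :=
  Subtype.ext (by simp [commutatorElement_inv])

@[simp]
theorem commutatorHom_mul_apply (x y z : G) :
    commutatorHom hc (x * y) z = commutatorHom hc x z * commutatorHom hc y z := by
  rw [commutatorHom_apply_comm, map_mul, mul_inv, ← commutatorHom_apply_comm,
    ← commutatorHom_apply_comm]

@[simp]
theorem commutatorHom_zpow_apply (x y : G) (k : ℤ) :
    commutatorHom hc (x ^ k) y = commutatorHom hc x y ^ k := by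
  rw [commutatorHom_apply_comm, map_zpow, ← inv_zpow, ← commutatorHom_apply_comm]

theorem center_le_ker_commutatorHom (x : G) : center G ≤ (commutatorHom hc x).ker :=
  fun _ hz => commutatorHom_apply_eq_one_iff.mpr (mem_center_iff.mp hz x)

theorem commutatorHom_eq_one_iff {x : G} : commutatorHom hc x = 1 ↔ x ∈ center G := by
  rw [DFunLike.ext_iff, mem_center_iff]
  exact forall_congr' fun g =>
    commutatorHom_apply_eq_one_iff.trans ((commute_iff_eq x g).trans eq_comm)

theorem pow_mem_center_of_commutatorElement_mem_center (hc : ∀ g h : G, ⁅g, h⁆ ∈ center G)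
    {p : ℕ} (helem : ∀ z ∈ center G, z ^ p = 1) (g : G) : g ^ p ∈ center G :=
  mem_center_iff.mpr fun h => (commutatorHom_apply_eq_one_iff (hc := hc)).mp
    (by rw [map_pow]; exact Subtype.ext (helem _ (hc h g)))

theorem commute_mul_zpow_of_commutatorHom_eq {x a b : G} {m n : ℤ}
    (h : commutatorHom hc a b = commutatorHom hc x a ^ m * commutatorHom hc x b ^ n) :
    Commute (a * x ^ (-n)) (b * x ^ m) := by
  refine (commutatorHom_apply_eq_one_iff (hc := hc)).mp ?_
  simp only [map_mul, map_zpow, commutatorHom_mul_apply, commutatorHom_zpow_apply,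
    commutatorHom_apply_self, one_zpow, mul_one]
  rw [commutatorHom_apply_comm x a, h]
  simp [zpow_neg, mul_comm, mul_assoc]

end CentralCommutators

section ClassTwo

variable [Group G] [Finite G] {p : ℕ} [Fact p.Prime]

theorem exists_isMulCommutative_index_eq_of_commute (hQ : Nat.card (G ⧸ center G) = p ^ 3)
    (hexp : ∀ g : G, g ^ p ∈ center G) {u v : G} (huv : Commute u v) (hu : u ∉ center G)
    (hv : (v : G ⧸ center G) ∉ zpowers (u : G ⧸ center G)) :
    ∃ A : Subgroup G, A.index = p ∧ IsMulCommutative A := by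
  have hp : p.Prime := Fact.out
  set A := closure (insert u (insert v (center G : Set G)))
  have hcomm : IsMulCommutative A := isMulCommutative_closure fun x hx y hy => by
    by_cases hyZ : y ∈ center G
    · exact mem_center_iff.mp hyZ x
    by_cases hxZ : x ∈ center G
    · exact (mem_center_iff.mp hxZ y).symm
    simp only [Set.mem_insert_iff, SetLike.mem_coe, hxZ, hyZ, or_false] at hx hy
    rcases hx with rfl | rfl <;> rcases hy with rfl | rfl
    exacts [rfl, huv.eq, huv.eq.symm, rfl]
  have huA : u ∈ A := subset_closure (by simp)
  have hvA : v ∈ A := subset_closure (by simp)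
  set B := A.map (QuotientGroup.mk' (center G))
  have hindex : B.index = A.index := index_map_eq _ (QuotientGroup.mk'_surjective _)
    (by rw [QuotientGroup.ker_mk']; exact fun z hz => subset_closure (by simp [hz]))
  have hlt : zpowers (u : G ⧸ center G) < B := SetLike.lt_iff_le_and_exists.mpr
    ⟨zpowers_le.mpr (mem_map_of_mem _ huA), (v : G ⧸ center G), mem_map_of_mem _ hvA, hv⟩
  have hB : p ^ 2 ∣ Nat.card B := by
    simpa [Nat.card_zpowers, QuotientGroup.orderOf_mk_eq_prime hexp hu, sq] using
      prime_mul_card_dvd_card_of_lt hp hlt (hQ ▸ card_subgroup_dvd_card B)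
  have hBindex : B.index ∣ p := by
    refine Nat.dvd_of_mul_dvd_mul_left (pow_pos hp.pos 2) ?_
    rw [← pow_succ, ← hQ, ← card_mul_index B]
    exact mul_dvd_mul_right hB _
  have hA_ne_top : A.index ≠ 1 := fun h => hu <| mem_center_iff.mpr fun g =>
    setLike_mul_comm (index_eq_one.mp h ▸ mem_top g) huA
  exact ⟨A, ((Nat.dvd_prime hp).mp (hindex ▸ hBindex)).resolve_left hA_ne_top, hcomm⟩

variable {hc : ∀ g h : G, ⁅g, h⁆ ∈ center G}

theorem exists_commute_of_not_surjective_commutatorHom (hZ : Nat.card (center G) = p ^ 2)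
    (hQ : Nat.card (G ⧸ center G) = p ^ 3) (hexp : ∀ g : G, g ^ p ∈ center G) {x : G}
    (hx : x ∉ center G) (hφ : ¬ Function.Surjective (commutatorHom hc x)) :
    ∃ y : G, Commute x y ∧ (y : G ⧸ center G) ∉ zpowers (x : G ⧸ center G) := by
  have hp : p.Prime := Fact.out
  have hker : (commutatorHom hc x).ker.index ∣ p := by
    have hlt : (commutatorHom hc x).range < ⊤ :=
      lt_top_iff_ne_top.mpr (mt MonoidHom.range_eq_top.mp hφ)
    have hdvd := prime_mul_card_dvd_card_of_lt hp hlt (by rw [card_top, hZ])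
    rw [card_top, hZ, sq] at hdvd
    rw [index_ker]
    exact Nat.dvd_of_mul_dvd_mul_left hp.pos hdvd
  set W := (zpowers (x : G ⧸ center G)).comap (QuotientGroup.mk' (center G))
  have hW : W.index = p ^ 2 := by
    rw [index_comap_of_surjective _ (QuotientGroup.mk'_surjective _)]
    have h := card_mul_index (zpowers (x : G ⧸ center G))
    rw [Nat.card_zpowers, QuotientGroup.orderOf_mk_eq_prime hexp hx, hQ, pow_succ'] at h
    exact Nat.eq_of_mul_eq_mul_left hp.pos h
  obtain ⟨y, hy, hyW⟩ := SetLike.not_le_iff_exists.mp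
      fun hle : (commutatorHom hc x).ker ≤ W => by
    have h := (index_dvd_of_le hle).trans hker
    rw [hW] at h
    exact absurd (Nat.le_of_dvd hp.pos h) (by nlinarith [hp.two_le])
  exact ⟨y, commutatorHom_apply_eq_one_iff.mp hy, hyW⟩

theorem exists_commute_of_surjective_commutatorHom (hZ : Nat.card (center G) = p ^ 2)
    (helem : ∀ z ∈ center G, z ^ p = 1) {x : G} (hx : x ∉ center G)
    (hφ : Function.Surjective (commutatorHom hc x)) :
    ∃ u v : G, Commute u v ∧ u ∉ center G ∧
      (v : G ⧸ center G) ∉ zpowers (u : G ⧸ center G) := by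
  have hp : p.Prime := Fact.out
  set φ := commutatorHom hc x
  obtain ⟨a, ha⟩ : ∃ a, φ a ≠ 1 := by
    by_contra! h
    exact hx (commutatorHom_eq_one_iff.mp (MonoidHom.ext h))
  have hord : orderOf (φ a) = p := orderOf_eq_prime (Subtype.ext (helem _ (φ a).2)) ha
  obtain ⟨z, hz⟩ := SetLike.exists_not_mem_of_ne_top (zpowers (φ a)) fun h => by
    have h' := Nat.card_zpowers (φ a)
    rw [h, card_top, hZ, hord] at h'
    exact absurd (Nat.pow_right_injective hp.two_le (h'.trans (pow_one p).symm)) (by norm_num)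
  obtain ⟨b, rfl⟩ := hφ z
  obtain ⟨m, n, hmn⟩ := mem_closure_pair.mp
    (closure_pair_eq_top_of_card_eq_sq hp hZ hord hz ▸ mem_top (commutatorHom hc a b))
  have hu : φ (a * x ^ (-n)) = φ a := by simp [φ]
  have hv : φ (b * x ^ m) = φ b := by simp [φ]
  refine ⟨_, _, commute_mul_zpow_of_commutatorHom_eq hmn.symm, fun hZu => ha ?_,
    fun hmem => hz ?_⟩
  · rw [← hu]
    exact center_le_ker_commutatorHom x hZu
  · rw [← hu, ← hv]
    exact QuotientGroup.apply_mem_zpowers_of_mk_mem_zpowers _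
      (center_le_ker_commutatorHom x) hmem

end ClassTwo

theorem stmt_5_general (G : Type*) [Group G] [Finite G] (p : ℕ) [Fact p.Prime]
    (hord : Nat.card G = p ^ 5)
    (hclass2 : commutator G ≤ Subgroup.center G)
    (hZcard : Nat.card (Subgroup.center G) = p ^ 2)
    (helem : ∀ z ∈ Subgroup.center G, z ^ p = 1) :
    ∃ A : Subgroup G, A.index = p ∧ ∀ x ∈ A, ∀ y ∈ A, x * y = y * x := by
  have hp : p.Prime := Fact.out
  have hc : ∀ g h : G, ⁅g, h⁆ ∈ center G := fun g h =>
    hclass2 (commutator_mem_commutator (mem_top g) (mem_top h))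
  have hexp := pow_mem_center_of_commutatorElement_mem_center hc helem
  have hQ : Nat.card (G ⧸ center G) = p ^ 3 := by
    have h := card_mul_index (center G)
    rw [index_eq_card, hZcard, hord, show 5 = 2 + 3 from rfl, pow_add] at h
    exact Nat.eq_of_mul_eq_mul_left (pow_pos hp.pos 2) h
  obtain ⟨x, hx⟩ := SetLike.exists_not_mem_of_ne_top (center G) fun h => by
    rw [h, card_top, hord] at hZcard
    exact absurd (Nat.pow_right_injective hp.two_le hZcard) (by norm_num)
  obtain ⟨u, v, huv, hu, hv⟩ : ∃ u v : G, Commute u v ∧ u ∉ center G ∧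
      (v : G ⧸ center G) ∉ zpowers (u : G ⧸ center G) := by
    by_cases hφ : Function.Surjective (commutatorHom hc x)
    · exact exists_commute_of_surjective_commutatorHom hZcard helem hx hφ
    · obtain ⟨y, hxy, hy⟩ :=
        exists_commute_of_not_surjective_commutatorHom hZcard hQ hexp hx hφ
      exact ⟨x, y, hxy, hx, hy⟩
  obtain ⟨A, hA, hcomm⟩ := exists_isMulCommutative_index_eq_of_commute hQ hexp huv hu hv
  exact ⟨A, hA, fun x hx y hy => setLike_mul_comm hx hy⟩

/-- A group of order p^5 of class 2 with center equal to the commutator subgroup,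
elementary abelian of order p², has an abelian subgroup of index p. -/
theorem stmt_5 (G : Type*) [Group G] [Finite G] (p : ℕ) [Fact p.Prime]
    (hord : Nat.card G = p ^ 5)
    (hclass2 : commutator G ≤ Subgroup.center G)
    (hZG' : Subgroup.center G = commutator G)
    (hZcard : Nat.card (Subgroup.center G) = p ^ 2)
    (helem : ∀ z ∈ Subgroup.center G, z ^ p = 1) :
    ∃ A : Subgroup G, A.index = p ∧ ∀ x ∈ A, ∀ y ∈ A, x * y = y * x :=
  stmt_5_general G p hord hclass2 hZcard helem
end

section
/- Let G be a finite p-group of order p^5 with |Z(G)| = p², nilpotency class 3, and |G'| = p². Then G has an abelian subgroup of index p. -/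
variable {G : Type*}

/-!
The third term `γ₃ = [G', G]` of the lower central series is central and has order `p`.
For `a ∈ G'` outside the centre we get `G' = ⟨a⟩γ₃`, so `C_G(a) ≤ C_G(G')`; as the conjugates
of `a` lie in the coset `γ₃ a`, the centralizer `C = C_G(G')` has index `p`. The subgroup
`G'Z(G)` centralizes `C` and has order at least `p³ = |C| / p`, so `C` is cyclic modulo a
central subgroup, hence abelian.
-/

open scoped commutatorElement

namespace Subgroup
variable [Group G]

theorem card_mul_relIndex {H K : Subgroup G} (h : H ≤ K) :
    Nat.card H * H.relIndex K = Nat.card K := by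
  rw [← relIndex_bot_left, ← relIndex_bot_left, relIndex_mul_relIndex _ _ _ bot_le h]

theorem index_centralizer_le_card {a : G} {N : Subgroup G} [Finite N]
    (h : ∀ g : G, ⁅g, a⁆ ∈ N) : (centralizer {a}).index ≤ Nat.card N := by
  have hmem : ∀ q, (quotientCentralizerEmbedding a q : G) ∈ N := by
    rintro ⟨x⟩
    exact h x
  exact Nat.card_le_card_of_injective (fun q ↦ ⟨_, hmem q⟩) fun q₁ q₂ hq ↦
    (quotientCentralizerEmbedding a).injective (Subtype.ext (congrArg Subtype.val hq :))

theorem centralizer_singleton_le_of_le_zpowers_sup_center {a : G} {K : Subgroup G}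
    (hK : K ≤ zpowers a ⊔ center G) : centralizer {a} ≤ centralizer K := by
  refine le_trans ?_ (centralizer_le hK)
  rw [zpowers_eq_closure, ← closure_eq (center G), ← closure_union, centralizer_closure]
  rintro g hg h (rfl | hh)
  · exact mem_centralizer_singleton_iff.mp hg |>.symm
  · exact mem_center_iff.mp hh g |>.symm

theorem isMulCommutative_of_le_centralizer_of_relIndex_dvd_prime {p : ℕ} [Fact p.Prime]
    {H K : Subgroup G} (hH : H ≤ centralizer K) (hp : H.relIndex K ∣ p) : IsMulCommutative K := by
  have hcen : H.subgroupOf K ≤ center K := fun x hx ↦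
    mem_center_iff.mpr fun y ↦ Subtype.ext (hH hx y y.2)
  have : (H.subgroupOf K).Normal :=
    ⟨fun n hn g ↦ by rwa [mem_center_iff.mp (hcen hn) g, mul_inv_cancel_right]⟩
  have : IsCyclic (K ⧸ H.subgroupOf K) :=
    isCyclic_of_card_dvd_prime (p := p) (by rwa [← index_eq_card])
  exact (QuotientGroup.mk' (H.subgroupOf K)).isMulCommutative_of_isCyclic_of_ker_le_center
    (by rwa [QuotientGroup.ker_mk'])

end Subgroup

namespace IsPGroup
variable [Group G] {p : ℕ} [Fact p.Prime] [Finite G]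

theorem card_mul_dvd_card_of_lt (hG : IsPGroup p G) {H K : Subgroup G} (h : H < K) :
    Nat.card H * p ∣ Nat.card K := by
  rw [← Subgroup.card_mul_relIndex h.le]
  refine mul_dvd_mul_left _ ?_
  obtain ⟨n, hn⟩ := (hG.to_subgroup K).index (H.subgroupOf K)
  have hn0 : n ≠ 0 := by
    rintro rfl
    exact h.not_ge (Subgroup.relIndex_eq_one.mp hn)
  rw [Subgroup.relIndex, hn]
  exact dvd_pow_self p hn0

theorem eq_of_lt_of_le_of_card_eq_mul (hG : IsPGroup p G) {N S K : Subgroup G} (hNS : N < S)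
    (hSK : S ≤ K) (hK : Nat.card K = Nat.card N * p) : S = K :=
  Subgroup.eq_of_le_of_card_ge hSK <|
    hK ▸ Nat.le_of_dvd Nat.card_pos (hG.card_mul_dvd_card_of_lt hNS)

theorem card_eq_of_bot_lt_of_lt (hG : IsPGroup p G) {N K : Subgroup G} (hN : ⊥ < N) (hNK : N < K)
    (hK : Nat.card K = p ^ 2) : Nat.card N = p := by
  have hpN := hG.card_mul_dvd_card_of_lt hN
  have hNp := hG.card_mul_dvd_card_of_lt hNK
  rw [Subgroup.card_bot, one_mul] at hpN
  rw [hK, sq] at hNp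
  exact Nat.dvd_antisymm (Nat.dvd_of_mul_dvd_mul_right (Fact.out : p.Prime).pos hNp) hpN

theorem index_eq_of_index_le_of_ne_top (hG : IsPGroup p G) {H : Subgroup G} (hle : H.index ≤ p)
    (hH : H ≠ ⊤) : H.index = p := by
  obtain ⟨n, hn⟩ := hG.index H
  have hn1 : n ≤ 1 :=
    (Nat.pow_le_pow_iff_right (Fact.out : p.Prime).one_lt).mp (by rwa [pow_one, ← hn])
  have hn0 : n ≠ 0 := by
    rintro rfl
    exact hH (Subgroup.index_eq_one.mp (hn.trans (pow_zero p)))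
  rw [hn, show n = 1 by omega, pow_one]

end IsPGroup

namespace Group
variable [Group G] [IsNilpotent G]

theorem lowerCentralSeries_le_center_of_nilpotencyClass_eq_succ {n : ℕ}
    (h : nilpotencyClass G = n + 1) :
    (⊤ : Subgroup G).lowerCentralSeries n ≤ Subgroup.center G := by
  have : ⁅(⊤ : Subgroup G).lowerCentralSeries n, ⊤⁆ = ⊥ :=
    h ▸ Subgroup.lowerCentralSeries_nilpotencyClass
  simpa [Subgroup.centralizer_univ] using Subgroup.commutator_eq_bot_iff_le_centralizer.mp this

theorem not_commutator_le_center_of_two_lt_nilpotencyClass (h : 2 < nilpotencyClass G) :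
    ¬ commutator G ≤ Subgroup.center G := by
  intro hle
  have : (⊤ : Subgroup G).lowerCentralSeries 2 = ⊥ :=
    Subgroup.commutator_eq_bot_iff_le_centralizer.mpr <| by
      rwa [Subgroup.coe_top, Subgroup.centralizer_univ]
  exact absurd (Subgroup.lowerCentralSeries_eq_bot_iff_nilpotencyClass_le.mp this) (by omega)

end Group

open Subgroup Group in
theorem IsPGroup.index_centralizer_commutator_eq [Group G] [Finite G] [IsNilpotent G]
    {p : ℕ} [Fact p.Prime] (hG : IsPGroup p G) (hclass : nilpotencyClass G = 3)
    (hG' : Nat.card (commutator G) = p ^ 2) : (centralizer (commutator G : Set G)).index = p := by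
  set γ := (⊤ : Subgroup G).lowerCentralSeries 2
  have hγZ : γ ≤ center G := lowerCentralSeries_le_center_of_nilpotencyClass_eq_succ hclass
  have hG'Z := not_commutator_le_center_of_two_lt_nilpotencyClass (G := G) (by omega)
  have hγG' : γ < commutator G := lt_of_le_of_ne (commutator_le_left _ _) fun h ↦ hG'Z (h ▸ hγZ)
  have hγ_ne : γ ≠ ⊥ := mt Subgroup.lowerCentralSeries_eq_bot_iff_nilpotencyClass_le.mp (by omega)
  have hγ : Nat.card γ = p := hG.card_eq_of_bot_lt_of_lt (bot_lt_iff_ne_bot.mpr hγ_ne) hγG' hG'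
  obtain ⟨a, haG', haZ⟩ := SetLike.not_le_iff_exists.mp hG'Z
  have hG'_eq : zpowers a ⊔ γ = commutator G :=
    hG.eq_of_lt_of_le_of_card_eq_mul
      (lt_of_le_of_ne le_sup_right fun h ↦ haZ (hγZ (h ▸ mem_sup_left (mem_zpowers a))))
      (sup_le (zpowers_le.mpr haG') hγG'.le) (by rw [hG', hγ, sq])
  have hle : (centralizer (commutator G : Set G)).index ≤ p := calc
    _ ≤ (centralizer {a}).index := index_antitone <|
      centralizer_singleton_le_of_le_zpowers_sup_center (hG'_eq ▸ sup_le_sup_left hγZ _)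
    _ ≤ Nat.card γ := index_centralizer_le_card fun g ↦ by
      rw [← commutatorElement_inv]
      exact inv_mem (commutator_mem_commutator haG' (mem_top g))
    _ = p := hγ
  exact hG.index_eq_of_index_le_of_ne_top hle fun h ↦ hG'Z (centralizer_eq_top_iff_subset.mp h)

/-- A group of order p^5 with center of order p², nilpotency class 3 and commutator
subgroup of order p² has an abelian subgroup of index p. -/
theorem stmt_7 (G : Type*) [Group G] [Finite G] (p : ℕ) [Fact p.Prime]
    [Group.IsNilpotent G]
    (hord : Nat.card G = p ^ 5)
    (hZ : Nat.card (Subgroup.center G) = p ^ 2)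
    (hclass : Group.nilpotencyClass G = 3)
    (hG' : Nat.card (commutator G) = p ^ 2) :
    ∃ A : Subgroup G, A.index = p ∧ ∀ x ∈ A, ∀ y ∈ A, x * y = y * x := by
  have hp : p.Prime := Fact.out
  have hG : IsPGroup p G := IsPGroup.of_card hord
  set C := Subgroup.centralizer (commutator G : Set G)
  have hC : C.index = p := hG.index_centralizer_commutator_eq hclass hG'
  have hCcard : Nat.card C = p ^ 3 * p := by
    have := C.card_mul_index
    rw [hC, hord, pow_succ, pow_succ] at this
    exact Nat.eq_of_mul_eq_mul_right hp.pos this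
  have : IsMulCommutative (commutator G) := IsPGroup.isMulCommutative_of_card_eq_prime_sq hG'
  set H := commutator G ⊔ Subgroup.center G
  have hHC : H ≤ C := sup_le (Subgroup.le_centralizer _) (Subgroup.center_le_centralizer _)
  have hH : p ^ 3 ∣ Nat.card H := by
    have hZH : Subgroup.center G < H := lt_of_le_of_ne le_sup_right fun h ↦
      Group.not_commutator_le_center_of_two_lt_nilpotencyClass (by omega) <|
        le_sup_left.trans h.ge
    simpa [hZ, pow_succ] using hG.card_mul_dvd_card_of_lt hZH
  have hrel : H.relIndex C ∣ p := by
    refine Nat.dvd_of_mul_dvd_mul_left (pow_pos hp.pos 3) ?_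
    rw [← hCcard, ← Subgroup.card_mul_relIndex hHC]
    exact mul_dvd_mul_right hH _
  have hHcen : H ≤ Subgroup.centralizer C :=
    sup_le (Subgroup.le_centralizer_iff.mpr le_rfl) (Subgroup.center_le_centralizer _)
  have : IsMulCommutative C :=
    Subgroup.isMulCommutative_of_le_centralizer_of_relIndex_dvd_prime hHcen hrel
  exact ⟨C, hC, fun x hx y hy ↦ setLike_mul_comm hx hy⟩
end
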